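/- arXiv:2307.02345 — 2 statements merged into one kernel-verified Lean document; each statement's English description precedes it below -/
import Mathlib

section
/- Let B > 0, γ ∈ (0,1), A ∈ ℝ, and set A* = A/B. Let p(x) = (1/B)·exp(−((x−A)/B + exp(−(x−A)/B))) be the Gumbel(A,B) density and q(x) = (1/(γB))·exp(−((x−γA)/(γB) + exp(−(x−γA)/(γB)))) be the Gumbel(γA, γB) density. If A* ≤ 0, then the Kullback–Leibler divergence KL(q‖p) = ∫_ℝ q(x)·ln(q(x)/p(x)) dx satisfies KL(q‖p) < ln(1/γ) + (1−γ)·(3/20 − A* − v), where v is the Euler–Mascheroni constant. -/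
/-!
After the substitution `u = (x - γA)/(γB)`, `q(x) dx` becomes the standard Gumbel density
`φ(u) = exp (-(u + e⁻ᵘ))` and `log (q/p)` becomes a combination of `1`, `u`, `e⁻ᵘ` and `e^{-γu}`.
The further substitution `t = e⁻ᵘ` turns the moments of `φ` into Euler integrals:
`∫ e^{-su} φ = Γ(s + 1)`, and `∫ u φ = -∫₀^∞ log t e⁻ᵗ dt = -Γ'(1) = v`. Hence
`KL(q‖p) = log (1/γ) + (γ - 1)(A* + v) - 1 + e^{(1-γ)A*} Γ(1 + γ)`, and for `A* ≤ 0` the last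
term is at most `1`, since `Γ ≤ 1` on `[1, 2]` by convexity.
-/

open MeasureTheory Real Set

section ExpNegSubstitution

variable {E : Type*} [NormedAddCommGroup E] [NormedSpace ℝ E]

lemma image_univ_exp_neg : (fun u : ℝ => exp (-u)) '' univ = Ioi 0 := by
  rw [image_univ, ← range_exp]
  exact neg_surjective.range_comp exp

lemma hasDerivWithinAt_exp_neg (u : ℝ) :
    HasDerivWithinAt (fun u : ℝ => exp (-u)) (-exp (-u)) univ u := by
  have h : HasDerivAt (fun u : ℝ => exp (-u)) (-exp (-u)) u := by
    simpa using (hasDerivAt_neg u).exp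
  exact h.hasDerivWithinAt

lemma injOn_exp_neg : InjOn (fun u : ℝ => exp (-u)) univ :=
  fun _ _ _ _ h => neg_injective (exp_injective h)

theorem integral_comp_exp_neg (g : ℝ → E) :
    ∫ u, exp (-u) • g (exp (-u)) = ∫ t in Ioi 0, g t := by
  rw [← image_univ_exp_neg, integral_image_eq_integral_abs_deriv_smul MeasurableSet.univ
    (fun u _ => hasDerivWithinAt_exp_neg u) injOn_exp_neg, setIntegral_univ]
  simp [abs_of_pos (exp_pos _)]

theorem integrable_comp_exp_neg_iff (g : ℝ → E) :
    Integrable (fun u => exp (-u) • g (exp (-u))) ↔ IntegrableOn g (Ioi 0) := by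
  rw [← image_univ_exp_neg, integrableOn_image_iff_integrableOn_abs_deriv_smul MeasurableSet.univ
    (fun u _ => hasDerivWithinAt_exp_neg u) injOn_exp_neg, integrableOn_univ]
  simp [abs_of_pos (exp_pos _)]

end ExpNegSubstitution

theorem integral_log_mul_exp_neg :
    ∫ t in Ioi 0, log t * exp (-t) = -eulerMascheroniConstant := by
  have hC := Complex.hasDerivAt_GammaIntegral (s := 1) one_pos
  simp only [sub_self, Complex.cpow_zero, one_mul, ← Complex.ofReal_mul] at hC
  rw [integral_complex_ofReal] at hC
  have hR : HasDerivAt Gamma (∫ t in Ioi 0, log t * exp (-t)) 1 := by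
    have hre : HasDerivAt (fun x : ℝ => (Complex.GammaIntegral x).re)
        (∫ t in Ioi 0, log t * exp (-t)) 1 := by
      simpa using hC.real_of_complex
    refine hre.congr_of_eventuallyEq ?_
    filter_upwards [eventually_gt_nhds one_pos] with x hx
    rw [← Complex.Gamma_eq_integral (by simpa using hx), Complex.Gamma_ofReal,
      Complex.ofReal_re]
  exact hR.unique hasDerivAt_Gamma_one

-- Were it not integrable, the integral would be the junk value `0 ≠ -v`.
theorem integrableOn_log_mul_exp_neg :
    IntegrableOn (fun t => log t * exp (-t)) (Ioi 0) := by
  by_contra h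
  have := integral_log_mul_exp_neg
  rw [integral_undef h] at this
  linarith [one_half_lt_eulerMascheroniConstant]

section GumbelMoments

lemma exp_neg_smul_gammaIntegrand_exp_neg (s u : ℝ) :
    exp (-u) • (exp (-exp (-u)) * exp (-u) ^ (s + 1 - 1))
      = exp (-(s * u)) * exp (-(u + exp (-u))) := by
  rw [add_sub_cancel_right, smul_eq_mul, ← exp_mul, ← exp_add, ← exp_add, ← exp_add]
  ring_nf

lemma exp_neg_smul_log_mul_exp_neg_exp_neg (u : ℝ) :
    exp (-u) • -(log (exp (-u)) * exp (-exp (-u))) = u * exp (-(u + exp (-u))) := by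
  rw [log_exp, smul_eq_mul, neg_add, exp_add]
  ring

theorem integrable_exp_neg_mul_gumbel {s : ℝ} (hs : -1 < s) :
    Integrable fun u => exp (-(s * u)) * exp (-(u + exp (-u))) := by
  simpa only [exp_neg_smul_gammaIntegrand_exp_neg] using
    (integrable_comp_exp_neg_iff _).2 (GammaIntegral_convergent (by linarith : 0 < s + 1))

theorem integral_exp_neg_mul_gumbel {s : ℝ} (hs : -1 < s) :
    ∫ u, exp (-(s * u)) * exp (-(u + exp (-u))) = Gamma (s + 1) := by
  simp only [Gamma_eq_integral (by linarith : 0 < s + 1), ← integral_comp_exp_neg,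
    exp_neg_smul_gammaIntegrand_exp_neg]

theorem integrable_mul_gumbel : Integrable fun u => u * exp (-(u + exp (-u))) := by
  simpa only [exp_neg_smul_log_mul_exp_neg_exp_neg] using
    (integrable_comp_exp_neg_iff (fun t => -(log t * exp (-t)))).2 integrableOn_log_mul_exp_neg.neg

theorem integral_mul_gumbel : ∫ u, u * exp (-(u + exp (-u))) = eulerMascheroniConstant := by
  simp only [← exp_neg_smul_log_mul_exp_neg_exp_neg,
    integral_comp_exp_neg (fun t => -(log t * exp (-t))), integral_neg, integral_log_mul_exp_neg,
    neg_neg]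

theorem integral_gumbel_mul_combination {s : ℝ} (hs : -1 < s) (c a b : ℝ) :
    ∫ u, exp (-(u + exp (-u))) * (c + a * u - exp (-u) + b * exp (-(s * u)))
      = c + a * eulerMascheroniConstant - 1 + b * Gamma (s + 1) := by
  have hc := (integrable_exp_neg_mul_gumbel (s := 0) (by norm_num)).const_mul c
  have ha := integrable_mul_gumbel.const_mul a
  have h1 := integrable_exp_neg_mul_gumbel (s := 1) (by norm_num)
  have hb := (integrable_exp_neg_mul_gumbel hs).const_mul b
  have hexpand (u : ℝ) : exp (-(u + exp (-u))) * (c + a * u - exp (-u) + b * exp (-(s * u))) =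
      c * (exp (-(0 * u)) * exp (-(u + exp (-u)))) + a * (u * exp (-(u + exp (-u))))
        - exp (-(1 * u)) * exp (-(u + exp (-u)))
        + b * (exp (-(s * u)) * exp (-(u + exp (-u)))) := by
    simp only [zero_mul, neg_zero, exp_zero, one_mul]
    ring
  simp only [hexpand]
  rw [integral_add _ hb, integral_sub _ h1, integral_add hc ha,
    integral_const_mul, integral_const_mul, integral_const_mul, integral_mul_gumbel,
    integral_exp_neg_mul_gumbel (by norm_num), integral_exp_neg_mul_gumbel (by norm_num),
    integral_exp_neg_mul_gumbel hs, zero_add, Gamma_one, one_add_one_eq_two, Gamma_two]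
  · ring
  · exact hc.add ha
  · exact (hc.add ha).sub h1

end GumbelMoments

noncomputable def gumbelPDFReal (μ β x : ℝ) : ℝ :=
  1 / β * exp (-((x - μ) / β + exp (-(x - μ) / β)))

section GumbelPDF

variable {μ β : ℝ}

lemma gumbelPDFReal_eq (μ β x : ℝ) :
    gumbelPDFReal μ β x = β⁻¹ * exp (-((x - μ) / β + exp (-((x - μ) / β)))) := by
  rw [gumbelPDFReal, one_div, neg_div]

lemma log_gumbelPDFReal (hβ : 0 < β) (x : ℝ) :
    log (gumbelPDFReal μ β x) = -log β - ((x - μ) / β + exp (-((x - μ) / β))) := by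
  rw [gumbelPDFReal_eq, log_mul (inv_pos.2 hβ).ne' (exp_pos _).ne', log_inv, log_exp]
  ring

lemma gumbelPDFReal_pos (hβ : 0 < β) (x : ℝ) : 0 < gumbelPDFReal μ β x := by
  rw [gumbelPDFReal_eq]
  positivity

theorem integral_gumbelPDFReal_mul_comp (hβ : 0 < β) (g : ℝ → ℝ) :
    ∫ x, gumbelPDFReal μ β x * g ((x - μ) / β) = ∫ u, exp (-(u + exp (-u))) * g u := by
  simp only [gumbelPDFReal_eq, mul_assoc]
  rw [integral_const_mul,
    integral_sub_right_eq_self (fun x => exp (-(x / β + exp (-(x / β)))) * g (x / β)) μ,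
    Measure.integral_comp_div (fun u => exp (-(u + exp (-u))) * g u), abs_of_pos hβ, smul_eq_mul,
    inv_mul_cancel_left₀ hβ.ne']

end GumbelPDF

theorem integral_gumbelPDFReal_mul_log_div {μ₁ β₁ μ₂ β₂ : ℝ} (hβ₁ : 0 < β₁) (hβ₂ : 0 < β₂) :
    ∫ x, gumbelPDFReal μ₁ β₁ x * log (gumbelPDFReal μ₁ β₁ x / gumbelPDFReal μ₂ β₂ x) =
      log (β₂ / β₁) + (μ₁ - μ₂) / β₂ + (β₁ / β₂ - 1) * eulerMascheroniConstant - 1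
        + exp (-((μ₁ - μ₂) / β₂)) * Gamma (β₁ / β₂ + 1) := by
  set s := β₁ / β₂ with hs_def
  set d := (μ₁ - μ₂) / β₂ with hd_def
  set c := log (β₂ / β₁) + d
  let L u := c + (s - 1) * u - exp (-u) + exp (-d) * exp (-(s * u))
  have hlog (x : ℝ) :
      log (gumbelPDFReal μ₁ β₁ x / gumbelPDFReal μ₂ β₂ x) = L ((x - μ₁) / β₁) := by
    have hz : (x - μ₂) / β₂ = s * ((x - μ₁) / β₁) + d := by
      rw [hs_def, hd_def]
      field_simp
      ring
    rw [log_div (gumbelPDFReal_pos hβ₁ x).ne' (gumbelPDFReal_pos hβ₂ x).ne',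
      log_gumbelPDFReal hβ₁, log_gumbelPDFReal hβ₂, hz, neg_add, exp_add]
    simp only [L, c, log_div hβ₂.ne' hβ₁.ne']
    ring
  have hs : -1 < s := by linarith [div_pos hβ₁ hβ₂]
  calc _ = ∫ x, gumbelPDFReal μ₁ β₁ x * L ((x - μ₁) / β₁) := by simp only [hlog]
    _ = ∫ u, exp (-(u + exp (-u))) * L u := integral_gumbelPDFReal_mul_comp hβ₁ L
    _ = _ := integral_gumbel_mul_combination hs _ _ _

theorem Real.Gamma_le_one_of_mem_Icc {x : ℝ} (hx : x ∈ Icc 1 2) : Gamma x ≤ 1 := by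
  rw [← segment_eq_Icc one_le_two] at hx
  simpa [Gamma_two] using
    convexOn_Gamma.le_on_segment (mem_Ioi.2 one_pos) (mem_Ioi.2 two_pos) hx

/-- KL-divergence bound between `Gumbel(γA, γB)` and `Gumbel(A, B)`, case `A/B ≤ 0`. -/
theorem kl_gumbel_scaled_bound_nonpos
    (B γ A : ℝ) (hB : 0 < B) (hγ : γ ∈ Set.Ioo (0:ℝ) 1) (hA : A / B ≤ 0) :
    (∫ x : ℝ,
        ((1 / (γ * B)) * exp (-((x - γ * A) / (γ * B) + exp (-(x - γ * A) / (γ * B)))))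
          * Real.log
            (((1 / (γ * B)) * exp (-((x - γ * A) / (γ * B) + exp (-(x - γ * A) / (γ * B)))))
              / ((1 / B) * exp (-((x - A) / B + exp (-(x - A) / B))))))
      < Real.log (1 / γ)
          + (1 - γ) * (3/20 - A / B - Real.eulerMascheroniConstant) := by
  obtain ⟨hγ0, hγ1⟩ := hγ
  change ∫ x, gumbelPDFReal (γ * A) (γ * B) x
      * log (gumbelPDFReal (γ * A) (γ * B) x / gumbelPDFReal A B x) < _
  rw [integral_gumbelPDFReal_mul_log_div (mul_pos hγ0 hB) hB, mul_div_cancel_right₀ _ hB.ne',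
    div_mul_cancel_right₀ hB.ne', one_div, show (γ * A - A) / B = (γ - 1) * (A / B) by ring]
  have hexp : exp (-((γ - 1) * (A / B))) ≤ 1 := exp_le_one_iff.2 (by nlinarith)
  have hΓ : Gamma (γ + 1) ≤ 1 := Gamma_le_one_of_mem_Icc ⟨by linarith, by linarith⟩
  have := mul_le_one₀ hexp (Gamma_pos_of_pos (by linarith)).le hΓ
  nlinarith
end

section
/- For all integers N ≥ 1 and 1 ≤ i ≤ N, the integral L₁(N,i) = ∫_ℝ g · exp(−(N+1−i)·g) / (1 + exp(−g))^{N+1} dg converges and equals ((N−i)!·(i−1)!/N!) · (∑_{k=1}^{i−1} 1/k − ∑_{k=1}^{N−i} 1/k), where an empty sum is 0. -/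
/-!
Substituting `u = sigmoid g`, the logistic distribution function, turns the integrand into
`(log u - log (1 - u)) * u ^ (i - 1) * (1 - u) ^ (N - i)` on `(0, 1)`, because
`sigmoid g ^ m * (1 - sigmoid g) ^ n = exp (-n g) / (1 + exp (-g)) ^ (m + n)` and
`g = log (sigmoid g) - log (1 - sigmoid g)`. The log-Beta integral
`∫₀¹ u ^ a (1 - u) ^ b log u = -(a! b! / (a + b + 1)!) (harmonic (a + b + 1) - harmonic a)`
follows by induction on `b` from `(1 - u) ^ (b + 1) = (1 - u) ^ b - u (1 - u) ^ b`, starting from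
`∫₀¹ u ^ a log u = -1 / (a + 1) ^ 2`; the `log (1 - u)` term is its mirror image under
`u ↦ 1 - u`.
-/

open MeasureTheory Real Set intervalIntegral

namespace Real

section ChangeOfVariables

variable {E : Type*} [NormedAddCommGroup E] [NormedSpace ℝ E]

lemma sigmoid_mul_one_sub_sigmoid_pos (g : ℝ) : 0 < sigmoid g * (1 - sigmoid g) :=
  mul_pos (sigmoid_pos g) (sub_pos.2 (sigmoid_lt_one g))

lemma image_univ_sigmoid : sigmoid '' univ = Ioo 0 1 := by
  rw [image_univ, range_sigmoid]

lemma integrableOn_Ioo_zero_one_iff_integrable_comp_sigmoid (h : ℝ → E) :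
    IntegrableOn h (Ioo 0 1) ↔
      Integrable (fun g => (sigmoid g * (1 - sigmoid g)) • h (sigmoid g)) := by
  rw [← image_univ_sigmoid, integrableOn_image_iff_integrableOn_abs_deriv_smul MeasurableSet.univ
    (fun g _ => (hasDerivAt_sigmoid g).hasDerivWithinAt) sigmoid_injective.injOn,
    integrableOn_univ]
  simp only [abs_of_pos (sigmoid_mul_one_sub_sigmoid_pos _)]

lemma setIntegral_Ioo_zero_one_eq_integral_comp_sigmoid (h : ℝ → E) :
    ∫ u in Ioo 0 1, h u = ∫ g, (sigmoid g * (1 - sigmoid g)) • h (sigmoid g) := by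
  rw [← image_univ_sigmoid, integral_image_eq_integral_abs_deriv_smul MeasurableSet.univ
    (fun g _ => (hasDerivAt_sigmoid g).hasDerivWithinAt) sigmoid_injective.injOn,
    Measure.restrict_univ]
  simp only [abs_of_pos (sigmoid_mul_one_sub_sigmoid_pos _)]

end ChangeOfVariables

lemma one_sub_sigmoid (g : ℝ) : 1 - sigmoid g = sigmoid g * exp (-g) := by
  rw [sigmoid_mul_rexp_neg, sigmoid_neg]

lemma log_sigmoid_sub_log_one_sub_sigmoid (g : ℝ) :
    log (sigmoid g) - log (1 - sigmoid g) = g := by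
  rw [one_sub_sigmoid, log_mul (sigmoid_pos g).ne' (exp_pos _).ne', log_exp]
  ring

lemma sigmoid_pow_mul_one_sub_sigmoid_pow (g : ℝ) (m n : ℕ) :
    sigmoid g ^ m * (1 - sigmoid g) ^ n = exp (-(n * g)) / (1 + exp (-g)) ^ (m + n) := by
  rw [one_sub_sigmoid, mul_pow, ← mul_assoc, ← pow_add, ← exp_nat_mul, sigmoid_def, inv_pow,
    mul_neg]
  field_simp

end Real

lemma intervalIntegrable_pow_mul_one_sub_pow_mul_log (a b : ℕ) :
    IntervalIntegrable (fun u : ℝ => u ^ a * (1 - u) ^ b * log u) volume 0 1 :=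
  intervalIntegrable_log'.continuousOn_mul (by fun_prop)

lemma intervalIntegrable_pow_mul_one_sub_pow_mul_log_one_sub (a b : ℕ) :
    IntervalIntegrable (fun u : ℝ => u ^ a * (1 - u) ^ b * log (1 - u)) volume 0 1 := by
  have h := (intervalIntegrable_log' (a := 0) (b := 1)).comp_sub_left 1
  rw [sub_zero, sub_self] at h
  exact h.symm.continuousOn_mul (by fun_prop)

lemma integral_pow_mul_log (a : ℕ) :
    ∫ u in (0 : ℝ)..1, u ^ a * log u = -(1 / (a + 1) ^ 2) := by
  have hcont : Continuous fun u : ℝ => u ^ (a + 1) * log u :=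
    ((continuous_pow a).mul continuous_mul_log).congr fun u => by simp only [Pi.mul_apply]; ring
  have hderiv : ∀ x ∈ Ioo (0 : ℝ) 1, HasDerivWithinAt
      (fun u => u ^ (a + 1) * log u / (a + 1) - u ^ (a + 1) / (a + 1) ^ 2)
      (x ^ a * log x) (Ioi x) x := by
    intro x hx
    have := (((hasDerivAt_pow (a + 1) x).mul (hasDerivAt_log hx.1.ne')).div_const
      ((a : ℝ) + 1)).sub ((hasDerivAt_pow (a + 1) x).div_const (((a : ℝ) + 1) ^ 2))
    refine (this.congr_deriv ?_).hasDerivWithinAt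
    simp only [Nat.add_sub_cancel]
    field_simp [hx.1.ne']
    push_cast
    ring
  rw [integral_eq_sub_of_hasDeriv_right_of_le zero_le_one (by fun_prop) hderiv
    (by simpa using intervalIntegrable_pow_mul_one_sub_pow_mul_log a 0)]
  simp

open Nat in
theorem integral_pow_mul_one_sub_pow_mul_log (a b : ℕ) :
    ∫ u in (0 : ℝ)..1, u ^ a * (1 - u) ^ b * log u
      = -((a ! * b ! : ℝ) / (a + b + 1)!) * (harmonic (a + b + 1) - harmonic a) := by
  induction b generalizing a with
  | zero =>
    simp only [pow_zero, mul_one, integral_pow_mul_log, add_zero, harmonic_succ, factorial_succ,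
      factorial_zero]
    push_cast
    field_simp
    ring
  | succ b ih =>
    have hsplit : ∀ u : ℝ, u ^ a * (1 - u) ^ (b + 1) * log u
        = u ^ a * (1 - u) ^ b * log u - u ^ (a + 1) * (1 - u) ^ b * log u := fun u => by ring
    simp only [hsplit]
    rw [integral_sub (intervalIntegrable_pow_mul_one_sub_pow_mul_log a b)
      (intervalIntegrable_pow_mul_one_sub_pow_mul_log (a + 1) b), ih, ih,
      show a + 1 + b + 1 = a + b + 1 + 1 by omega, show a + (b + 1) + 1 = a + b + 1 + 1 by omega]
    simp only [harmonic_succ, factorial_succ]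
    push_cast
    field_simp
    ring

open Nat in
theorem integral_pow_mul_one_sub_pow_mul_log_one_sub (a b : ℕ) :
    ∫ u in (0 : ℝ)..1, u ^ a * (1 - u) ^ b * log (1 - u)
      = -((a ! * b ! : ℝ) / (a + b + 1)!) * (harmonic (a + b + 1) - harmonic b) := by
  have h := integral_comp_sub_left (fun v : ℝ => v ^ b * (1 - v) ^ a * log v) (a := 0) (b := 1) 1
  simp only [sub_zero, sub_self, sub_sub_cancel, integral_pow_mul_one_sub_pow_mul_log] at h
  rw [add_comm b a, mul_comm (b ! : ℝ)] at h
  rw [← h]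
  congr 1 with u
  ring

lemma intervalIntegrable_log_sub_log_one_sub_mul (a b : ℕ) :
    IntervalIntegrable (fun u : ℝ => (log u - log (1 - u)) * (u ^ a * (1 - u) ^ b)) volume 0 1 :=
  ((intervalIntegrable_pow_mul_one_sub_pow_mul_log a b).sub
    (intervalIntegrable_pow_mul_one_sub_pow_mul_log_one_sub a b)).congr <|
    fun u _ => by ring

open Nat in
theorem integral_log_sub_log_one_sub_mul (a b : ℕ) :
    ∫ u in (0 : ℝ)..1, (log u - log (1 - u)) * (u ^ a * (1 - u) ^ b)
      = (a ! * b ! : ℝ) / (a + b + 1)! * (harmonic a - harmonic b) := by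
  calc _ = ∫ u in (0 : ℝ)..1, u ^ a * (1 - u) ^ b * log u - u ^ a * (1 - u) ^ b * log (1 - u) :=
        integral_congr fun u _ => by ring
    _ = _ := by
      rw [integral_sub (intervalIntegrable_pow_mul_one_sub_pow_mul_log a b)
        (intervalIntegrable_pow_mul_one_sub_pow_mul_log_one_sub a b),
        integral_pow_mul_one_sub_pow_mul_log, integral_pow_mul_one_sub_pow_mul_log_one_sub]
      ring

lemma sum_Icc_one_div_eq_harmonic (n : ℕ) :
    ∑ k ∈ Finset.Icc 1 n, (1 : ℝ) / k = harmonic n := by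
  simp [harmonic_eq_sum_Icc, one_div]

/-- The first-moment integral
`L₁(N,i) = ∫ g·exp(−(N+1−i)g)/(1+exp(−g))^{N+1} dg` converges and equals
`((N−i)!·(i−1)!/N!)·(∑_{k=1}^{i−1} 1/k − ∑_{k=1}^{N−i} 1/k)`. -/
theorem logistic_order_statistic_first_moment
    (N i : ℕ) (hi1 : 1 ≤ i) (hiN : i ≤ N) :
    Integrable (fun g : ℝ => g * exp (-((N + 1 - i : ℕ) * g)) / (1 + exp (-g)) ^ (N + 1)) ∧
    (∫ g : ℝ, g * exp (-((N + 1 - i : ℕ) * g)) / (1 + exp (-g)) ^ (N + 1))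
      = (((N - i).factorial * (i - 1).factorial : ℝ) / N.factorial)
          * ((∑ k ∈ Finset.Icc 1 (i - 1), (1 : ℝ) / k)
              - ∑ k ∈ Finset.Icc 1 (N - i), (1 : ℝ) / k) := by
  obtain ⟨a, rfl⟩ : ∃ a, i = a + 1 := ⟨i - 1, by omega⟩
  obtain ⟨b, rfl⟩ : ∃ b, N = a + b + 1 := ⟨N - (a + 1), by omega⟩
  set h : ℝ → ℝ := fun u => (log u - log (1 - u)) * (u ^ a * (1 - u) ^ b)
  have hsubst : (fun g : ℝ => g * exp (-((a + b + 1 + 1 - (a + 1) : ℕ) * g))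
      / (1 + exp (-g)) ^ (a + b + 1 + 1))
        = fun g => (sigmoid g * (1 - sigmoid g)) • h (sigmoid g) := by
    ext g
    rw [show a + b + 1 + 1 - (a + 1) = b + 1 by omega,
      show a + b + 1 + 1 = (a + 1) + (b + 1) by omega, mul_div_assoc,
      ← sigmoid_pow_mul_one_sub_sigmoid_pow, smul_eq_mul]
    simp only [h, log_sigmoid_sub_log_one_sub_sigmoid]
    ring
  have hIoo : ∫ u in Ioo 0 1, h u = ∫ u in (0 : ℝ)..1, h u := by
    rw [integral_of_le zero_le_one, integral_Ioc_eq_integral_Ioo]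
  rw [hsubst, ← integrableOn_Ioo_zero_one_iff_integrable_comp_sigmoid,
    ← setIntegral_Ioo_zero_one_eq_integral_comp_sigmoid, hIoo, integral_log_sub_log_one_sub_mul,
    sum_Icc_one_div_eq_harmonic, sum_Icc_one_div_eq_harmonic,
    show a + b + 1 - (a + 1) = b by omega, Nat.add_sub_cancel]
  exact ⟨(intervalIntegrable_iff_integrableOn_Ioo_of_le zero_le_one).1
    (intervalIntegrable_log_sub_log_one_sub_mul a b), by ring⟩
end
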